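/- Accuracy of the optimization-based limiter: let f_h be the numerical solution with cell average f̄_h, let w̄_h be the minimizer of ‖x_h − f̄_h‖_{L²} over piecewise constants x_h satisfying ∫_Ω x_h = ∫_Ω f_h and m ≤ x_h ≤ M, and set f_h^lim = (f_h − f̄_h) + w̄_h. If there exists a function P_h f with m ≤ P_h f ≤ M, ∫_Ω P_h f = ∫_Ω f_h, and ‖P_h f − f‖_{L²} ≤ C h^{k+1}, and ‖f_h − f‖_{L²} ≤ C h^{k+1}, then ‖f_h^lim − f‖_{L²} ≤ 4 C h^{k+1}. -/

import Mathlib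

/-!
The cell average `x` of `P_h f` is admissible in the minimization defining `w̄_h`: averaging over a
cell preserves the bounds `m ≤ · ≤ M` and the integral. Hence `‖w̄_h − f̄_h‖ ≤ ‖x − f̄_h‖`. Now
`x − f̄_h` is the cell average of `P_h f − f_h`, and cell averaging is an `L²` contraction (Jensen
on each cell), so `‖w̄_h − f̄_h‖ ≤ ‖P_h f − f_h‖ ≤ 2 C h^{k+1}`. Since `f_h^lim − f_h = w̄_h − f̄_h`,
the triangle inequality gives `‖f_h^lim − f‖ ≤ 3 C h^{k+1}`.
-/

open MeasureTheory

section L2Dist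

variable {X : Type*} [MeasurableSpace X] {ν : Measure X}

noncomputable def l2Dist (ν : Measure X) (a b : X → ℝ) : ℝ := √(∫ x, (a x - b x) ^ 2 ∂ν)

lemma sqrt_integral_sq_eq_toReal_eLpNorm {g : X → ℝ} (hg : MemLp g 2 ν) :
    √(∫ x, g x ^ 2 ∂ν) = (eLpNorm g 2 ν).toReal := by
  rw [hg.eLpNorm_eq_integral_rpow_norm two_ne_zero ENNReal.ofNat_ne_top,
    ENNReal.toReal_ofReal (by positivity), Real.sqrt_eq_rpow]
  norm_num

lemma l2Dist_eq_toReal_eLpNorm {a b : X → ℝ} (ha : MemLp a 2 ν) (hb : MemLp b 2 ν) :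
    l2Dist ν a b = (eLpNorm (a - b) 2 ν).toReal :=
  sqrt_integral_sq_eq_toReal_eLpNorm (ha.sub hb)

lemma l2Dist_comm (a b : X → ℝ) : l2Dist ν a b = l2Dist ν b a := by
  simp only [l2Dist, ← neg_sub (a _), neg_sq]

lemma l2Dist_triangle {a b c : X → ℝ} (ha : MemLp a 2 ν) (hb : MemLp b 2 ν) (hc : MemLp c 2 ν) :
    l2Dist ν a c ≤ l2Dist ν a b + l2Dist ν b c := by
  have hab := (ha.sub hb).eLpNorm_ne_top
  have hbc := (hb.sub hc).eLpNorm_ne_top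
  rw [l2Dist_eq_toReal_eLpNorm ha hc, l2Dist_eq_toReal_eLpNorm ha hb,
    l2Dist_eq_toReal_eLpNorm hb hc, ← ENNReal.toReal_add hab hbc]
  refine ENNReal.toReal_mono (by finiteness) ?_
  simpa using eLpNorm_add_le (ha.sub hb).1 (hb.sub hc).1 one_le_two

end L2Dist

section Cells

variable {X ι : Type*} [Fintype ι] {E : ι → Set X}

noncomputable def piecewiseConst (E : ι → Set X) (c : ι → ℝ) (x : X) : ℝ :=
  ∑ i, (E i).indicator (fun _ => c i) x

lemma piecewiseConst_of_mem (hdisj : Pairwise (Function.onFun Disjoint E)) (c : ι → ℝ) {i : ι}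
    {x : X} (hx : x ∈ E i) : piecewiseConst E c x = c i := by
  rw [piecewiseConst, Finset.sum_eq_single i]
  · exact Set.indicator_of_mem hx _
  · exact fun j _ hji => Set.indicator_of_notMem (Set.disjoint_left.mp (hdisj hji).symm hx) _
  · simp

variable [MeasurableSpace X] {μ ν : Measure X}

noncomputable def cellAverage (μ : Measure X) (E : ι → Set X) (g : X → ℝ) : X → ℝ :=
  piecewiseConst E fun i => ⨍ x in E i, g x ∂μ

lemma cellAverage_of_mem (hdisj : Pairwise (Function.onFun Disjoint E)) (g : X → ℝ) {i : ι}
    {x : X} (hx : x ∈ E i) : cellAverage μ E g x = ⨍ y in E i, g y ∂μ :=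
  piecewiseConst_of_mem hdisj _ hx

lemma setAverage_eq_div {s : Set X} {V : ℝ} (hV : 0 ≤ V) (hs : μ s = ENNReal.ofReal V)
    (g : X → ℝ) : ⨍ x in s, g x ∂μ = (∫ x in s, g x ∂μ) / V := by
  rw [setAverage_eq, measureReal_def, hs, ENNReal.toReal_ofReal hV, smul_eq_mul, div_eq_inv_mul]

lemma integrableOn_of_memLp_restrict {s t : Set X} {g : X → ℝ} (hg : MemLp g 2 (μ.restrict t))
    (hs : μ s ≠ ⊤) (hst : s ⊆ t) : IntegrableOn g s μ :=
  have : Fact (μ s < ⊤) := ⟨hs.lt_top⟩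
  (hg.mono_measure (Measure.restrict_mono hst le_rfl)).integrable one_le_two

lemma memLp_piecewiseConst (hmeas : ∀ i, MeasurableSet (E i)) (hfin : ∀ i, ν (E i) ≠ ⊤)
    (c : ι → ℝ) (p : ENNReal) : MemLp (piecewiseConst E c) p ν := by
  have hsum : piecewiseConst E c = ∑ i, (E i).indicator fun _ => c i := by
    ext x; simp [piecewiseConst]
  rw [hsum]
  exact memLp_finsetSum' _ fun i _ => memLp_indicator_const p (hmeas i) (c i) (Or.inr (hfin i))

lemma memLp_restrict_iUnion_of_eq_on_cells (hmeas : ∀ i, MeasurableSet (E i))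
    (hdisj : Pairwise (Function.onFun Disjoint E)) (hfin : ∀ i, μ (E i) ≠ ⊤) {g : X → ℝ}
    (hg : ∀ i, ∀ x ∈ E i, ∀ y ∈ E i, g x = g y) (p : ENNReal) :
    MemLp g p (μ.restrict (⋃ i, E i)) := by
  have hval : ∀ i, ∃ a, ∀ x ∈ E i, g x = a := fun i => by
    rcases (E i).eq_empty_or_nonempty with hempty | ⟨y, hy⟩
    · exact ⟨0, fun x hx => by simp [hempty] at hx⟩
    · exact ⟨g y, fun x hx => hg i x hx y hy⟩
  choose c hgc using hval
  refine (memLp_piecewiseConst hmeas (fun i => ?_) c p).ae_eq ?_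
  · exact ne_top_of_le_ne_top (hfin i) (Measure.restrict_le_self _)
  · refine ae_restrict_of_forall_mem (MeasurableSet.iUnion hmeas) fun x hx => ?_
    obtain ⟨i, hxi⟩ := Set.mem_iUnion.mp hx
    rw [hgc i x hxi, piecewiseConst_of_mem hdisj c hxi]

lemma setIntegral_iUnion_comp_piecewiseConst (hmeas : ∀ i, MeasurableSet (E i))
    (hdisj : Pairwise (Function.onFun Disjoint E)) (hfin : ∀ i, μ (E i) ≠ ⊤) (F : ℝ → ℝ)
    (c : ι → ℝ) :
    ∫ x in ⋃ i, E i, F (piecewiseConst E c x) ∂μ = ∑ i, μ.real (E i) * F (c i) := by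
  have hcell : ∀ i, Set.EqOn (fun x => F (piecewiseConst E c x)) (fun _ => F (c i)) (E i) :=
    fun i x hx => by simp only [piecewiseConst_of_mem hdisj c hx]
  rw [integral_iUnion_fintype hmeas hdisj
    fun i => (integrableOn_const (hfin i)).congr_fun (hcell i).symm (hmeas i)]
  refine Finset.sum_congr rfl fun i _ => ?_
  rw [setIntegral_congr_fun (hmeas i) (hcell i), setIntegral_const, smul_eq_mul]

lemma setIntegral_iUnion_cellAverage (hmeas : ∀ i, MeasurableSet (E i))
    (hdisj : Pairwise (Function.onFun Disjoint E)) (hfin : ∀ i, μ (E i) ≠ ⊤) {g : X → ℝ}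
    (hg : ∀ i, IntegrableOn g (E i) μ) :
    ∫ x in ⋃ i, E i, cellAverage μ E g x ∂μ = ∫ x in ⋃ i, E i, g x ∂μ := by
  refine (setIntegral_iUnion_comp_piecewiseConst hmeas hdisj hfin id _).trans ?_
  rw [integral_iUnion_fintype hmeas hdisj hg]
  exact Finset.sum_congr rfl fun i _ => measure_smul_setAverage g (hfin i)

lemma cellAverage_mem_Icc (hmeas : ∀ i, MeasurableSet (E i))
    (hdisj : Pairwise (Function.onFun Disjoint E)) (hfin : ∀ i, μ (E i) ≠ ⊤)
    (hpos : ∀ i, μ (E i) ≠ 0) {g : X → ℝ} (hg : ∀ i, IntegrableOn g (E i) μ) {m M : ℝ}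
    (hbnd : ∀ x ∈ ⋃ i, E i, g x ∈ Set.Icc m M) {x : X} (hx : x ∈ ⋃ i, E i) :
    cellAverage μ E g x ∈ Set.Icc m M := by
  obtain ⟨i, hxi⟩ := Set.mem_iUnion.mp hx
  rw [cellAverage_of_mem hdisj g hxi]
  refine (convex_Icc m M).set_average_mem isClosed_Icc (hpos i) (hfin i) ?_ (hg i)
  exact ae_restrict_of_forall_mem (hmeas i) fun y hy => hbnd y (Set.mem_iUnion_of_mem i hy)

lemma measureReal_mul_sq_setAverage_le {s : Set X} (hs : μ s ≠ ⊤) {g : X → ℝ}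
    (hg : IntegrableOn g s μ) (hg2 : IntegrableOn (fun x => g x ^ 2) s μ) :
    μ.real s * (⨍ x in s, g x ∂μ) ^ 2 ≤ ∫ x in s, g x ^ 2 ∂μ := by
  rcases eq_or_ne (μ s) 0 with hs0 | hs0
  · simp [measureReal_def, hs0]
  have jensen : (⨍ x in s, g x ∂μ) ^ 2 ≤ ⨍ x in s, g x ^ 2 ∂μ :=
    even_two.convexOn_pow.map_set_average_le (continuous_pow 2).continuousOn isClosed_univ hs0
      hs (Filter.Eventually.of_forall fun _ => Set.mem_univ _) hg hg2
  calc μ.real s * (⨍ x in s, g x ∂μ) ^ 2 ≤ μ.real s * ⨍ x in s, g x ^ 2 ∂μ :=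
        mul_le_mul_of_nonneg_left jensen measureReal_nonneg
    _ = ∫ x in s, g x ^ 2 ∂μ := measure_smul_setAverage _ hs

lemma setIntegral_iUnion_sq_cellAverage_le (hmeas : ∀ i, MeasurableSet (E i))
    (hdisj : Pairwise (Function.onFun Disjoint E)) (hfin : ∀ i, μ (E i) ≠ ⊤) {g : X → ℝ}
    (hg : MemLp g 2 (μ.restrict (⋃ i, E i))) :
    ∫ x in ⋃ i, E i, cellAverage μ E g x ^ 2 ∂μ ≤ ∫ x in ⋃ i, E i, g x ^ 2 ∂μ := by
  have hg2 : ∀ i, IntegrableOn (fun x => g x ^ 2) (E i) μ :=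
    fun i => IntegrableOn.mono_set hg.integrable_sq (Set.subset_iUnion E i)
  rw [cellAverage, setIntegral_iUnion_comp_piecewiseConst hmeas hdisj hfin (· ^ 2),
    integral_iUnion_fintype hmeas hdisj hg2]
  exact Finset.sum_le_sum fun i _ => measureReal_mul_sq_setAverage_le (hfin i)
    (integrableOn_of_memLp_restrict hg (hfin i) (Set.subset_iUnion E i)) (hg2 i)

lemma cellAverage_sub {g₁ g₂ : X → ℝ} (hg₁ : ∀ i, IntegrableOn g₁ (E i) μ)
    (hg₂ : ∀ i, IntegrableOn g₂ (E i) μ) :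
    cellAverage μ E (fun x => g₁ x - g₂ x) = cellAverage μ E g₁ - cellAverage μ E g₂ := by
  ext x
  simp only [cellAverage, piecewiseConst, Pi.sub_apply, ← Finset.sum_sub_distrib,
    setAverage_eq, integral_sub (hg₁ _) (hg₂ _), smul_sub, Set.indicator_sub]

end Cells

theorem stmt12_general {X : Type*} [MeasurableSpace X] (μ : Measure X)
    (N : ℕ) (E : Fin N → Set X) (hmeas : ∀ i, MeasurableSet (E i))
    (hdisj : Pairwise (Function.onFun Disjoint E))
    (Ω : Set X) (hΩ : Ω = ⋃ i, E i)
    (vol : Fin N → ℝ) (hvol : ∀ i, 0 < vol i)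
    (hE : ∀ i, μ (E i) = ENNReal.ofReal (vol i))
    (m M C h : ℝ) (k : ℕ)
    (f fh Phf fbar wbar flim : X → ℝ)
    (hfL2 : MemLp f 2 (μ.restrict Ω)) (hfhL2 : MemLp fh 2 (μ.restrict Ω))
    (hPhfL2 : MemLp Phf 2 (μ.restrict Ω))
    -- `fbar` is the piecewise constant cell average of `fh`
    (hfbar : ∀ i, ∀ v ∈ E i, fbar v = (∫ u in E i, fh u ∂μ) / vol i)
    -- `wbar` minimizes the L² distance to `fbar` among feasible piecewise constants
    (hwbar_feas : (∀ i, ∀ v ∈ E i, ∀ v' ∈ E i, wbar v = wbar v') ∧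
      (∫ v in Ω, wbar v ∂μ) = (∫ v in Ω, fh v ∂μ) ∧ ∀ v ∈ Ω, m ≤ wbar v ∧ wbar v ≤ M)
    (hwbar_min : ∀ x : X → ℝ,
      (∀ i, ∀ v ∈ E i, ∀ v' ∈ E i, x v = x v') →
      (∫ v in Ω, x v ∂μ) = (∫ v in Ω, fh v ∂μ) →
      (∀ v ∈ Ω, m ≤ x v ∧ x v ≤ M) →
      (∫ v in Ω, (wbar v - fbar v) ^ 2 ∂μ) ≤ ∫ v in Ω, (x v - fbar v) ^ 2 ∂μ)
    -- the postprocessed solution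
    (hflim : ∀ v, flim v = (fh v - fbar v) + wbar v)
    -- properties of `P_h f`
    (hPhf_bnd : ∀ v ∈ Ω, m ≤ Phf v ∧ Phf v ≤ M)
    (hPhf_cons : (∫ v in Ω, Phf v ∂μ) = ∫ v in Ω, fh v ∂μ)
    (hPhf_acc : Real.sqrt (∫ v in Ω, (Phf v - f v) ^ 2 ∂μ) ≤ C * h ^ (k + 1))
    (hfh_acc : Real.sqrt (∫ v in Ω, (fh v - f v) ^ 2 ∂μ) ≤ C * h ^ (k + 1)) :
    Real.sqrt (∫ v in Ω, (flim v - f v) ^ 2 ∂μ) ≤ 4 * C * h ^ (k + 1) := by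
  subst hΩ
  set ν := μ.restrict (⋃ i, E i)
  have hfin : ∀ i, μ (E i) ≠ ⊤ := fun i => by rw [hE i]; exact ENNReal.ofReal_ne_top
  have hpos : ∀ i, μ (E i) ≠ 0 := fun i => by
    rw [hE i]; exact (ENNReal.ofReal_pos.mpr (hvol i)).ne'
  have hcell : ∀ {g : X → ℝ}, MemLp g 2 ν → ∀ i, IntegrableOn g (E i) μ :=
    fun hg i => integrableOn_of_memLp_restrict hg (hfin i) (Set.subset_iUnion E i)
  have hfbar_avg : ∀ v ∈ ⋃ i, E i, fbar v = cellAverage μ E fh v := fun v hv => by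
    obtain ⟨i, hvi⟩ := Set.mem_iUnion.mp hv
    rw [hfbar i v hvi, cellAverage_of_mem hdisj fh hvi, setAverage_eq_div (hvol i).le (hE i)]
  have hfbarL2 : MemLp fbar 2 ν := memLp_restrict_iUnion_of_eq_on_cells hmeas hdisj hfin
    (fun i v hv v' hv' => by rw [hfbar i v hv, hfbar i v' hv']) 2
  have hwbarL2 : MemLp wbar 2 ν :=
    memLp_restrict_iUnion_of_eq_on_cells hmeas hdisj hfin hwbar_feas.1 2
  have hflimL2 : MemLp flim 2 ν := by
    rw [funext hflim]; exact (hfhL2.sub hfbarL2).add hwbarL2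
  have hmin := hwbar_min (cellAverage μ E Phf)
    (fun i v hv v' hv' => by rw [cellAverage_of_mem hdisj _ hv, cellAverage_of_mem hdisj _ hv'])
    ((setIntegral_iUnion_cellAverage hmeas hdisj hfin (hcell hPhfL2)).trans hPhf_cons)
    (fun v hv => cellAverage_mem_Icc hmeas hdisj hfin hpos (hcell hPhfL2) hPhf_bnd hv)
  have hcontr : ∫ v in ⋃ i, E i, (cellAverage μ E Phf v - fbar v) ^ 2 ∂μ
      ≤ ∫ v in ⋃ i, E i, (Phf v - fh v) ^ 2 ∂μ := calc
    _ = ∫ v in ⋃ i, E i, cellAverage μ E (fun v => Phf v - fh v) v ^ 2 ∂μ := by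
        refine setIntegral_congr_fun (MeasurableSet.iUnion hmeas) fun v hv => ?_
        rw [cellAverage_sub (hcell hPhfL2) (hcell hfhL2), Pi.sub_apply, hfbar_avg v hv]
    _ ≤ _ := setIntegral_iUnion_sq_cellAverage_le hmeas hdisj hfin (hPhfL2.sub hfhL2)
  have hlimiter : l2Dist ν flim fh ≤ l2Dist ν Phf fh := by
    refine le_of_eq_of_le ?_ (Real.sqrt_le_sqrt (hmin.trans hcontr))
    simp only [l2Dist, hflim, add_sub_right_comm, sub_sub_cancel_left, neg_add_eq_sub]
  have hPhf_dist : l2Dist ν Phf f ≤ C * h ^ (k + 1) := hPhf_acc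
  have hfh_dist : l2Dist ν fh f ≤ C * h ^ (k + 1) := hfh_acc
  show l2Dist ν flim f ≤ _
  calc l2Dist ν flim f ≤ l2Dist ν flim fh + l2Dist ν fh f := l2Dist_triangle hflimL2 hfhL2 hfL2
    _ ≤ (l2Dist ν Phf f + l2Dist ν f fh) + l2Dist ν fh f := by
        gcongr; exact hlimiter.trans (l2Dist_triangle hPhfL2 hfL2 hfhL2)
    _ ≤ 4 * C * h ^ (k + 1) := by
        rw [l2Dist_comm f fh]; linarith [(Real.sqrt_nonneg _).trans hfh_acc]

/-- Accuracy of the optimization-based cell average limiter: if the cell averages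
are modified by the constrained `L²` minimization and there exists a conservative
bound-respecting approximation `P_h f` with `‖P_h f − f‖_{L²} ≤ C h^{k+1}`, and
`‖f_h − f‖_{L²} ≤ C h^{k+1}`, then `‖f_h^lim − f‖_{L²} ≤ 4 C h^{k+1}`. -/
theorem stmt12 {X : Type*} [MeasurableSpace X] (μ : Measure X)
    (N : ℕ) (E : Fin N → Set X) (hmeas : ∀ i, MeasurableSet (E i))
    (hdisj : Pairwise (Function.onFun Disjoint E))
    (Ω : Set X) (hΩ : Ω = ⋃ i, E i)
    (vol : Fin N → ℝ) (hvol : ∀ i, 0 < vol i)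
    (hE : ∀ i, μ (E i) = ENNReal.ofReal (vol i))
    (m M C h : ℝ) (hmM : m ≤ M) (hC : 0 < C) (hh : 0 < h) (k : ℕ)
    (f fh Phf fbar wbar flim : X → ℝ)
    (hfL2 : MemLp f 2 (μ.restrict Ω)) (hfhL2 : MemLp fh 2 (μ.restrict Ω))
    (hPhfL2 : MemLp Phf 2 (μ.restrict Ω))
    -- `fbar` is the piecewise constant cell average of `fh`
    (hfbar : ∀ i, ∀ v ∈ E i, fbar v = (∫ u in E i, fh u ∂μ) / vol i)
    -- `wbar` minimizes the L² distance to `fbar` among feasible piecewise constants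
    (hwbar_feas : (∀ i, ∀ v ∈ E i, ∀ v' ∈ E i, wbar v = wbar v') ∧
      (∫ v in Ω, wbar v ∂μ) = (∫ v in Ω, fh v ∂μ) ∧ ∀ v ∈ Ω, m ≤ wbar v ∧ wbar v ≤ M)
    (hwbar_min : ∀ x : X → ℝ,
      (∀ i, ∀ v ∈ E i, ∀ v' ∈ E i, x v = x v') →
      (∫ v in Ω, x v ∂μ) = (∫ v in Ω, fh v ∂μ) →
      (∀ v ∈ Ω, m ≤ x v ∧ x v ≤ M) →
      (∫ v in Ω, (wbar v - fbar v) ^ 2 ∂μ) ≤ ∫ v in Ω, (x v - fbar v) ^ 2 ∂μ)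
    -- the postprocessed solution
    (hflim : ∀ v, flim v = (fh v - fbar v) + wbar v)
    -- properties of `P_h f`
    (hPhf_bnd : ∀ v ∈ Ω, m ≤ Phf v ∧ Phf v ≤ M)
    (hPhf_cons : (∫ v in Ω, Phf v ∂μ) = ∫ v in Ω, fh v ∂μ)
    (hPhf_acc : Real.sqrt (∫ v in Ω, (Phf v - f v) ^ 2 ∂μ) ≤ C * h ^ (k + 1))
    (hfh_acc : Real.sqrt (∫ v in Ω, (fh v - f v) ^ 2 ∂μ) ≤ C * h ^ (k + 1)) :
    Real.sqrt (∫ v in Ω, (flim v - f v) ^ 2 ∂μ) ≤ 4 * C * h ^ (k + 1) :=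
  stmt12_general μ N E hmeas hdisj Ω hΩ vol hvol hE m M C h k f fh Phf fbar wbar flim hfL2 hfhL2
    hPhfL2 hfbar hwbar_feas hwbar_min hflim hPhf_bnd hPhf_cons hPhf_acc hfh_acc
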